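/- Let G be a C^∞ Lie group modelled on I : ModelWithCorners ℝ E H and let S : G → Submodule ℝ E be a multiplicative distribution on G. Then the fiber S 1 at the identity is invariant under the adjoint action of G: for every g : G, Submodule.map (mfderiv I I (fun x => g * x * g⁻¹) 1) (S 1) = S 1, i.e. the tangent map at the identity of conjugation by g maps S(1) onto S(1). -/

import Mathlib

/-!
By the Leibniz rule, the differential of multiplication at `(g, h)` sends `(v, w)` to
`d(· * h)_g v + d(g * ·)_h w`, so taking one of `v`, `w` zero shows that a multiplicative
distribution is preserved by the differentials of left and right translations. Conjugation by `g`
is left translation by `g` followed by right translation by `g⁻¹`, so its differential at `1`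
maps `S 1` into `S (g * 1 * g⁻¹) = S 1`. The same holds for conjugation by `g⁻¹`, whose
differential at `1` is inverse to that of conjugation by `g`; this gives the reverse inclusion.
-/

open Manifold

section

variable {E : Type*} [NormedAddCommGroup E] [NormedSpace ℝ E]
  {H : Type*} [TopologicalSpace H] (I : ModelWithCorners ℝ E H)
  {G : Type*} [TopologicalSpace G] [ChartedSpace H G]

def IsMultiplicativeDistribution [Mul G] (S : G → Submodule ℝ E) : Prop :=
  ∀ (g h : G) (v w : E), v ∈ S g → w ∈ S h →
    mfderiv (I.prod I) I (fun p : G × G => p.1 * p.2) (g, h)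
      ((v, w) : TangentSpace (I.prod I) (g, h)) ∈ S (g * h)

variable {I}

theorem mfderiv_mul_apply [Mul G] [ContMDiffMul I 1 G] (g h : G) (v w : E) :
    mfderiv (I.prod I) I (fun p : G × G => p.1 * p.2) (g, h)
        ((v, w) : TangentSpace (I.prod I) (g, h)) =
      mfderiv I I (· * h) g v + mfderiv I I (g * ·) h w :=
  mfderiv_prod_eq_add_apply ((contMDiff_mul I 1).mdifferentiable one_ne_zero _)

namespace IsMultiplicativeDistribution

variable [Monoid G] [ContMDiffMul I 1 G] {S : G → Submodule ℝ E}

theorem mfderiv_mul_left_mem (hS : IsMultiplicativeDistribution I S) (g : G) {h : G} {w : E}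
    (hw : w ∈ S h) : mfderiv I I (g * ·) h w ∈ S (g * h) := by
  convert hS g h 0 w (zero_mem _) hw using 1
  -- `erw`: the `0 : E` here is not syntactically the `0` of `TangentSpace I g`
  erw [mfderiv_mul_apply, ContinuousLinearMap.map_zero, zero_add]

theorem mfderiv_mul_right_mem (hS : IsMultiplicativeDistribution I S) {g : G} (h : G) {v : E}
    (hv : v ∈ S g) : mfderiv I I (· * h) g v ∈ S (g * h) := by
  convert hS g h v 0 hv (zero_mem _) using 1
  erw [mfderiv_mul_apply, ContinuousLinearMap.map_zero, add_zero]

theorem mfderiv_mul_mul_mem (hS : IsMultiplicativeDistribution I S) (a b : G) {x : G} {v : E}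
    (hv : v ∈ S x) : mfderiv I I (fun y => a * y * b) x v ∈ S (a * x * b) := by
  convert hS.mfderiv_mul_right_mem b (hS.mfderiv_mul_left_mem a hv) using 1
  exact mfderiv_comp_apply (g := (· * b)) x mdifferentiableAt_mul_right
    mdifferentiableAt_mul_left v

end IsMultiplicativeDistribution

theorem mfderiv_conj_apply_mfderiv_conj_inv [Group G] [ContMDiffMul I 1 G] (g : G) (v : E) :
    mfderiv I I (fun x => g * x * g⁻¹) 1 (mfderiv I I (fun x => g⁻¹ * x * g) 1 v) = v := by
  have hdiff : ∀ a b x : G, MDifferentiableAt I I (fun y => a * y * b) x := fun _ _ _ =>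
    mdifferentiableAt_mul_right.comp _ mdifferentiableAt_mul_left
  have hid : (fun x => g * x * g⁻¹) ∘ (fun x => g⁻¹ * x * g) = id := by
    funext x
    simp [mul_assoc]
  have hcomp := mfderiv_comp_apply_of_eq 1 (hdiff g g⁻¹ 1) (hdiff g⁻¹ g 1)
    (by group) v
  rw [hid, mfderiv_id] at hcomp
  exact hcomp.symm

end

/-- The fiber at the identity of a multiplicative distribution on a Lie group is
invariant under the adjoint action: the tangent map at the identity of the conjugation
by `g` maps `S 1` onto `S 1`. -/
theorem stmt_7 {E : Type*} [NormedAddCommGroup E] [NormedSpace ℝ E]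
    {H : Type*} [TopologicalSpace H] (I : ModelWithCorners ℝ E H)
    {G : Type*} [TopologicalSpace G] [ChartedSpace H G] [Group G] [LieGroup I (⊤ : ℕ∞) G]
    (S : G → Submodule ℝ E)
    (hS : ∀ (g h : G) (v w : E), v ∈ S g → w ∈ S h →
      mfderiv (I.prod I) I (fun p : G × G => p.1 * p.2) (g, h)
        ((v, w) : TangentSpace (I.prod I) (g, h)) ∈ S (g * h)) :
    ∀ g : G, Submodule.map ((show E →L[ℝ] E from mfderiv I I (fun x : G => g * x * g⁻¹) 1) : E →ₗ[ℝ] E) (S 1) = S 1 := by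
  intro g
  have hconj : ∀ a b : G, a * b = 1 → ∀ v ∈ S 1, mfderiv I I (fun x => a * x * b) 1 v ∈ S 1 := by
    intro a b hab v hv
    simpa only [mul_one, hab] using IsMultiplicativeDistribution.mfderiv_mul_mul_mem hS a b hv
  refine le_antisymm ?_ fun v hv => ⟨_, hconj g⁻¹ g (inv_mul_cancel g) v hv, ?_⟩
  · rintro _ ⟨v, hv, rfl⟩
    exact hconj g g⁻¹ (mul_inv_cancel g) v hv
  · exact mfderiv_conj_apply_mfderiv_conj_inv g v
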